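/- Let w be an involution in a Weyl group W and s a simple reflection with sw ≠ ws. Then s maps R_w⁺ = {α ∈ R⁺ : w(α) = −α} bijectively onto R_{sws}⁺ = {α ∈ R⁺ : sws(α) = −α}. -/

import Mathlib

open scoped RealInnerProductSpace

variable {V : Type*} [NormedAddCommGroup V] [InnerProductSpace ℝ V] [FiniteDimensional ℝ V]

/-- The reflection in the hyperplane orthogonal to `α`. -/
noncomputable def wrefl (α : V) : V ≃ₗᵢ[ℝ] V := Submodule.reflection (ℝ ∙ α)ᗮ

/-- A (reduced) root system in a real inner product space. -/
structure IsRootSystem (R : Finset V) : Prop where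
  ne_zero : (0 : V) ∉ R
  span_eq_top : Submodule.span ℝ (R : Set V) = ⊤
  reduced : ∀ α ∈ R, ∀ c : ℝ, c • α ∈ R → c = 1 ∨ c = -1
  refl_mem : ∀ α ∈ R, ∀ β ∈ R, wrefl α β ∈ R
  pairing_int : ∀ α ∈ R, ∀ β ∈ R, ∃ n : ℤ, 2 * ⟪α, β⟫ / ⟪α, α⟫ = (n : ℝ)

/-- The Weyl group of a root system, as a group of linear isometries. -/
noncomputable def weylGroup (R : Finset V) : Subgroup (V ≃ₗᵢ[ℝ] V) :=
  Subgroup.closure (wrefl '' (R : Set V))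

/-- A system of positive roots. -/
structure IsPositiveSystem (R Rpos : Finset V) : Prop where
  subset : Rpos ⊆ R
  mem_or_neg_mem : ∀ α ∈ R, α ∈ Rpos ∨ -α ∈ Rpos
  not_mem_and_neg_mem : ∀ α ∈ Rpos, -α ∉ Rpos
  add_mem : ∀ α ∈ Rpos, ∀ β ∈ Rpos, α + β ∈ R → α + β ∈ Rpos

/-- A simple (indecomposable) positive root. -/
def IsSimpleRoot (Rpos : Finset V) (α : V) : Prop :=
  α ∈ Rpos ∧ ¬∃ β ∈ Rpos, ∃ γ ∈ Rpos, α = β + γ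

/-- The length of `w`, i.e. the number of positive roots sent by `w` to negative roots. -/
noncomputable def len (Rpos : Finset V) (w : V ≃ₗᵢ[ℝ] V) : ℕ := by
  classical exact (Rpos.filter fun α => w α ∉ Rpos).card

/-- The coroot attached to a root. -/
noncomputable def cv (α : V) : V := (2 / ⟪α, α⟫) • α

/-- The dominance order: `α ≤ α'` iff `α' - α` is a nonnegative combination of
positive roots. -/
def rle (Rpos : Finset V) (α α' : V) : Prop :=
  ∃ c : V → ℝ, (∀ β, 0 ≤ c β) ∧ α' - α = ∑ β ∈ Rpos, c β • β

/-- `α` is maximal in `S` for the dominance order. -/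
def IsMaxIn (Rpos : Finset V) (S : Set V) (α : V) : Prop :=
  α ∈ S ∧ ∀ α' ∈ S, rle Rpos α α' → rle Rpos α' α

/-- The `n`-th layer of Kostant's cascade: the maximal positive roots among those
orthogonal to all roots of the previous layers. -/
def cascadeLevel (Rpos : Finset V) : ℕ → Set V
  | n =>
    {α | IsMaxIn Rpos
      {β | β ∈ Rpos ∧ ∀ m, m < n → ∀ γ ∈ cascadeLevel Rpos m, ⟪γ, β⟫ = 0} α}
  termination_by n => n

/-- Kostant's cascade of orthogonal roots. -/
def cascade (Rpos : Finset V) : Set V := ⋃ n, cascadeLevel Rpos n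

/-- The set of positive roots on which an involution `w` acts by `-1`. -/
noncomputable def posNegSet (Rpos : Finset V) (w : V ≃ₗᵢ[ℝ] V) : Finset V := by
  classical exact Rpos.filter fun α => w α = -α

/-- The element `r_w`: the sum of the coroots of the cascade of the root system
`R_w = {α ∈ R : w α = -α}`. -/
noncomputable def rInv (Rpos : Finset V) (w : V ≃ₗᵢ[ℝ] V) : V :=
  ∑ α ∈ posNegSet Rpos w, Set.indicator (cascade (posNegSet Rpos w)) cv α

/-!
A simple reflection `s = s_α` permutes the positive roots other than `α`. Positivity is only
axiomatic here (closure under sums inside `R`), so this goes by induction on the Cartan integer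
`n = ⟨β, α^∨⟩`: if `n > 0` then `β - α` is a positive root with Cartan integer `n - 2`, and
`s β = s (β - α) - α` is positive because `α` is simple; if `n < 0` the same works with `β + α`,
using closure under sums.

Since `s` conjugates `w` into `sws`, it maps the `-1`-eigenvectors of `w` onto those of `sws`, and
neither set contains `α`: `w α = -α` would make `s` commute with `w`.
-/

section

variable {E : Type*} [NormedAddCommGroup E] {R Rpos : Finset E} {α β : E}

lemma IsSimpleRoot.sub_mem_of_mem (hP : IsPositiveSystem R Rpos) (hα : IsSimpleRoot Rpos α)
    (hβ : β ∈ Rpos) (h : β - α ∈ R) : β - α ∈ Rpos :=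
  (hP.mem_or_neg_mem _ h).resolve_right fun h' => hα.2 ⟨β, hβ, -(β - α), h', by abel⟩

variable [InnerProductSpace ℝ E]

lemma inner_cv_left (α x : E) : ⟪cv α, x⟫ = 2 * ⟪α, x⟫ / ⟪α, α⟫ := by
  rw [cv, real_inner_smul_left]; ring

lemma inner_cv_self {α : E} (hα : α ≠ 0) : ⟪cv α, α⟫ = 2 := by
  rw [inner_cv_left, mul_div_assoc, div_self (inner_self_ne_zero.mpr hα), mul_one]

lemma inner_cv_pos_iff {α : E} (hα : α ≠ 0) (x : E) : 0 < ⟪cv α, x⟫ ↔ 0 < ⟪α, x⟫ := by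
  rw [inner_cv_left, div_pos_iff_of_pos_right (real_inner_self_pos.mpr hα),
    mul_pos_iff_of_pos_left two_pos]

lemma wrefl_apply (α x : E) : wrefl α x = x - ⟪cv α, x⟫ • α := by
  rw [wrefl, Submodule.reflection_orthogonal_apply, Submodule.reflection_singleton_apply,
    inner_cv_left, real_inner_self_eq_norm_sq]
  simp only [RCLike.ofReal_real_eq_id, id]
  module

lemma wrefl_self (α : E) : wrefl α α = -α :=
  Submodule.reflection_orthogonalComplement_singleton_eq_neg α

@[simp]
lemma wrefl_wrefl (α x : E) : wrefl α (wrefl α x) = x :=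
  Submodule.reflection_reflection _ x

lemma wrefl_mul_comm_of_apply_eq_neg {α : E} {w : E ≃ₗᵢ[ℝ] E} (hwα : w α = -α) :
    wrefl α * w = w * wrefl α := by
  have hα : w.symm α = -α := by rw [LinearIsometryEquiv.symm_apply_eq, map_neg, hwα, neg_neg]
  have hinner (x : E) : ⟪cv α, w x⟫ = -⟪cv α, x⟫ := by
    rw [inner_cv_left, inner_cv_left, real_inner_comm, w.inner_map_eq_flip, hα, inner_neg_right,
      real_inner_comm]
    ring
  ext x
  simp only [LinearIsometryEquiv.coe_mul, Function.comp_apply, wrefl_apply, map_sub, map_smul,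
    hinner, hwα]
  module

namespace IsRootSystem

lemma ne_zero_of_mem (hR : IsRootSystem R) (hα : α ∈ R) : α ≠ 0 :=
  fun h => hR.ne_zero (h ▸ hα)

lemma neg_mem (hR : IsRootSystem R) (hα : α ∈ R) : -α ∈ R :=
  wrefl_self α ▸ hR.refl_mem α hα α hα

lemma exists_int_inner_cv (hR : IsRootSystem R) (hα : α ∈ R) (hβ : β ∈ R) :
    ∃ n : ℤ, ⟪cv α, β⟫ = n := by
  simpa only [inner_cv_left] using hR.pairing_int α hα β hβ

lemma inner_mul_inner_self_lt (hR : IsRootSystem R) (hα : α ∈ R) (hβ : β ∈ R) (hβα : β ≠ α)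
    (hβα' : β ≠ -α) : ⟪α, β⟫ * ⟪α, β⟫ < ⟪α, α⟫ * ⟪β, β⟫ := by
  refine (real_inner_mul_inner_self_le α β).lt_of_ne fun heq => ?_
  have hnorm : ‖⟪α, β⟫‖ = ‖α‖ * ‖β‖ := by
    rw [Real.norm_eq_abs, ← sq_eq_sq₀ (abs_nonneg _) (by positivity), sq_abs, mul_pow,
      ← real_inner_self_eq_norm_sq, ← real_inner_self_eq_norm_sq, sq, heq]
  obtain ⟨r, -, rfl⟩ :=
    (norm_inner_eq_norm_iff (hR.ne_zero_of_mem hα) (hR.ne_zero_of_mem hβ)).mp hnorm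
  rcases hR.reduced α hα r hβ with rfl | rfl
  · exact hβα (one_smul ℝ α)
  · exact hβα' (neg_one_smul ℝ α)

lemma inner_cv_mul_inner_cv_lt_four (hR : IsRootSystem R) (hα : α ∈ R) (hβ : β ∈ R)
    (hβα : β ≠ α) (hβα' : β ≠ -α) : ⟪cv α, β⟫ * ⟪cv β, α⟫ < 4 := by
  have hαα : 0 < ⟪α, α⟫ := real_inner_self_pos.mpr (hR.ne_zero_of_mem hα)
  have hββ : 0 < ⟪β, β⟫ := real_inner_self_pos.mpr (hR.ne_zero_of_mem hβ)
  rw [inner_cv_left, inner_cv_left, real_inner_comm α β, div_mul_div_comm,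
    div_lt_iff₀ (mul_pos hαα hββ)]
  linarith [hR.inner_mul_inner_self_lt hα hβ hβα hβα']

lemma sub_mem_of_inner_cv_pos (hR : IsRootSystem R) (hα : α ∈ R) (hβ : β ∈ R) (hβα : β ≠ α)
    (hpos : 0 < ⟪cv α, β⟫) : α - β ∈ R := by
  have hα0 := hR.ne_zero_of_mem hα
  have hβα' : β ≠ -α := by
    rintro rfl
    rw [inner_neg_right, inner_cv_self hα0] at hpos
    norm_num at hpos
  obtain ⟨m, hm⟩ := hR.exists_int_inner_cv hα hβ
  obtain ⟨k, hk⟩ := hR.exists_int_inner_cv hβ hα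
  have hm0 : 0 < m := by rw [hm] at hpos; exact_mod_cast hpos
  have hk0 : 0 < k := by
    rw [← Int.cast_pos (R := ℝ), ← hk, inner_cv_pos_iff (hR.ne_zero_of_mem hβ), real_inner_comm,
      ← inner_cv_pos_iff hα0]
    exact hpos
  have hmk : m * k < 4 := by
    have := hR.inner_cv_mul_inner_cv_lt_four hα hβ hβα hβα'
    rw [hm, hk] at this
    exact_mod_cast this
  obtain rfl | rfl : m = 1 ∨ k = 1 := by
    by_contra! h
    nlinarith [show 2 ≤ m by omega, show 2 ≤ k by omega]
  · have hs := hR.refl_mem α hα β hβ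
    rw [wrefl_apply, hm, Int.cast_one, one_smul] at hs
    simpa using hR.neg_mem hs
  · have hs := hR.refl_mem β hβ α hα
    rwa [wrefl_apply, hk, Int.cast_one, one_smul] at hs

lemma add_mem_of_inner_cv_neg (hR : IsRootSystem R) (hα : α ∈ R) (hβ : β ∈ R) (hβα : β ≠ -α)
    (hneg : ⟪cv α, β⟫ < 0) : α + β ∈ R := by
  rw [← sub_neg_eq_add]
  refine hR.sub_mem_of_inner_cv_pos hα (hR.neg_mem hβ) (fun h => hβα ?_) ?_
  · rw [← h, neg_neg]
  · rwa [inner_neg_right, neg_pos]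

end IsRootSystem

lemma IsPositiveSystem.wrefl_mem_of_inner_cv_eq_neg_natCast (hR : IsRootSystem R)
    (hP : IsPositiveSystem R Rpos) (hα : α ∈ Rpos) (n : ℕ) :
    ∀ {β}, β ∈ Rpos → ⟪cv α, β⟫ = -n → wrefl α β ∈ Rpos := by
  have hαR := hP.subset hα
  induction n using Nat.twoStepInduction with
  | zero =>
    intro β hβ h
    rwa [wrefl_apply, h, Nat.cast_zero, neg_zero, zero_smul, sub_zero]
  | one =>
    intro β hβ h
    have hs := hR.refl_mem α hαR β (hP.subset hβ)
    rw [wrefl_apply, h, Nat.cast_one, neg_one_smul, sub_neg_eq_add] at hs ⊢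
    exact hP.add_mem β hβ α hα hs
  | more n ih _ =>
    intro β hβ h
    have hβα : β ≠ -α := fun heq => hP.not_mem_and_neg_mem α hα (heq ▸ hβ)
    have hadd : β + α ∈ Rpos := by
      refine hP.add_mem β hβ α hα (add_comm α β ▸ ?_)
      refine hR.add_mem_of_inner_cv_neg hαR (hP.subset hβ) hβα ?_
      rw [h]; push_cast; linarith
    have hrec : wrefl α (β + α) ∈ Rpos := by
      refine ih hadd ?_
      rw [inner_add_right, h, inner_cv_self (hR.ne_zero_of_mem hαR)]; push_cast; ring
    have heq : wrefl α β = wrefl α (β + α) + α := by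
      rw [map_add, wrefl_self]; abel
    have hs := hR.refl_mem α hαR β (hP.subset hβ)
    rw [heq] at hs ⊢
    exact hP.add_mem _ hrec α hα hs

lemma IsSimpleRoot.wrefl_mem_of_inner_cv_eq_natCast (hR : IsRootSystem R)
    (hP : IsPositiveSystem R Rpos) (hα : IsSimpleRoot Rpos α) (n : ℕ) :
    ∀ {β}, β ∈ Rpos → β ≠ α → ⟪cv α, β⟫ = n → wrefl α β ∈ Rpos := by
  have hαR := hP.subset hα.1
  induction n using Nat.twoStepInduction with
  | zero =>
    intro β hβ _ h
    rwa [wrefl_apply, h, Nat.cast_zero, zero_smul, sub_zero]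
  | one =>
    intro β hβ _ h
    have hs := hR.refl_mem α hαR β (hP.subset hβ)
    rw [wrefl_apply, h, Nat.cast_one, one_smul] at hs ⊢
    exact hα.sub_mem_of_mem hP hβ hs
  | more n ih _ =>
    intro β hβ hβα h
    have hsub : β - α ∈ Rpos := by
      refine hα.sub_mem_of_mem hP hβ ?_
      rw [← neg_sub]
      refine hR.neg_mem (hR.sub_mem_of_inner_cv_pos hαR (hP.subset hβ) hβα ?_)
      rw [h]; positivity
    have hsubα : β - α ≠ α := fun h' => by
      have := hR.reduced α hαR 2 (by
        rw [two_smul]; nth_rw 1 [← h']; rw [sub_add_cancel]; exact hP.subset hβ)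
      norm_num at this
    have hrec : wrefl α (β - α) ∈ Rpos := by
      refine ih hsub hsubα ?_
      rw [inner_sub_right, h, inner_cv_self (hR.ne_zero_of_mem hαR)]; push_cast; ring
    have heq : wrefl α β = wrefl α (β - α) - α := by
      rw [map_sub, wrefl_self]; abel
    have hs := hR.refl_mem α hαR β (hP.subset hβ)
    rw [heq] at hs ⊢
    exact hα.sub_mem_of_mem hP hrec hs

lemma IsSimpleRoot.wrefl_mem (hR : IsRootSystem R) (hP : IsPositiveSystem R Rpos)
    (hα : IsSimpleRoot Rpos α) (hβ : β ∈ Rpos) (hβα : β ≠ α) : wrefl α β ∈ Rpos := by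
  obtain ⟨m, hm⟩ := hR.exists_int_inner_cv (hP.subset hα.1) (hP.subset hβ)
  rcases m.eq_nat_or_neg with ⟨n, rfl | rfl⟩
  · exact hα.wrefl_mem_of_inner_cv_eq_natCast hR hP n hβ hβα hm
  · exact hP.wrefl_mem_of_inner_cv_eq_neg_natCast hR hα.1 n hβ (by rw [hm]; push_cast; rfl)

end

theorem simple_reflection_bijOn_posNegRoots_general
    {R Rpos : Finset V} (hR : IsRootSystem R) (hP : IsPositiveSystem R Rpos)
    (w : V ≃ₗᵢ[ℝ] V)
    (α : V) (hα : IsSimpleRoot Rpos α)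
    (hnc : wrefl α * w ≠ w * wrefl α) :
    Set.BijOn (wrefl α) {β : V | β ∈ Rpos ∧ w β = -β}
      {β : V | β ∈ Rpos ∧ (wrefl α * w * wrefl α) β = -β} := by
  have hwα : w α ≠ -α := fun h => hnc (wrefl_mul_comm_of_apply_eq_neg h)
  refine ⟨?_, (wrefl α).injective.injOn, ?_⟩
  · rintro β ⟨hβ, hwβ⟩
    refine ⟨hα.wrefl_mem hR hP hβ (by rintro rfl; exact hwα hwβ), ?_⟩
    simp [hwβ]
  · rintro γ ⟨hγ, hwγ⟩
    have hwsγ : w (wrefl α γ) = -wrefl α γ := by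
      simpa using congrArg (wrefl α) hwγ
    refine ⟨wrefl α γ, ⟨hα.wrefl_mem hR hP hγ fun hγα => hwα ?_, hwsγ⟩, wrefl_wrefl α γ⟩
    rwa [hγα, wrefl_self, map_neg, neg_inj] at hwsγ

/-- If `w` is an involution in the Weyl group and `s` is a simple reflection with
`sw ≠ ws`, then `s` maps `R_w⁺ = {α ∈ R⁺ : w α = -α}` bijectively onto `R_{sws}⁺`. -/
theorem simple_reflection_bijOn_posNegRoots
    {R Rpos : Finset V} (hR : IsRootSystem R) (hP : IsPositiveSystem R Rpos)
    (w : V ≃ₗᵢ[ℝ] V) (hw : w ∈ weylGroup R) (hw2 : w * w = 1)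
    (α : V) (hα : IsSimpleRoot Rpos α)
    (hnc : wrefl α * w ≠ w * wrefl α) :
    Set.BijOn (wrefl α) {β : V | β ∈ Rpos ∧ w β = -β}
      {β : V | β ∈ Rpos ∧ (wrefl α * w * wrefl α) β = -β} :=
  simple_reflection_bijOn_posNegRoots_general hR hP w α hα hnc
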